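/- For τ ∈ (0, 1/4), let a₁ < b₁ be the two real roots of q₁ and b_* = (3(1−4τ))^{−1/3}. For every real x with a₁ < x < b₁, the cubic polynomial u³ − R(x)u + D(x) has exactly one real root and a pair of nonreal complex-conjugate roots. For every real x with x < a₁ or x > b₁ and x ≠ b_*, the cubic u³ − R(x)u + D(x) has three distinct real roots. -/

import Mathlib

/-!
Writing `κ = (3(1−4τ))^{1/3}`, so that `c = −3κ²/4`, `q₂(x) = κx − 1` and `b_* = 1/κ`, the
discriminant of `u³ − R(x)u + D(x)` factors as `4R³ − 27D² = (243/256) q₁ q₂²`. Hence for real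
`x ≠ b_*` its sign is that of `q₁(x)`. The quartic `q₁` is positive at `±∞`, negative at `κ²/4`
and vanishes only at `a₁, b₁`, so it is negative exactly on `(a₁, b₁)`; moreover `q₁(b_*) ≥ 0`,
so `b_*` lies outside that interval. A real depressed cubic with negative discriminant has one
real root and a conjugate pair, and with positive discriminant three distinct real roots.
-/

noncomputable section

/-- The constant `c = −(243(1−4τ)²/64)^{1/3}` (real cube root). -/
def ccf (τ : ℝ) : ℝ := -(243 * (1 - 4 * τ) ^ 2 / 64) ^ ((1 : ℝ) / 3)

/-- `R(z) = 3z⁴ − 3z − c`. -/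
def RR (τ : ℝ) (z : ℂ) : ℂ := 3 * z ^ 4 - 3 * z - (ccf τ : ℂ)

/-- `D(z) = −2z⁶ + 3z³ + cz² − 3τ`. -/
def DD (τ : ℝ) (z : ℂ) : ℂ :=
  -2 * z ^ 6 + 3 * z ^ 3 + (ccf τ : ℂ) * z ^ 2 - 3 * (τ : ℂ)

/-- The quartic `q₁`. -/
def q1 (τ : ℝ) (z : ℂ) : ℂ :=
  ((256 / (3 : ℝ) ^ ((5 : ℝ) / 3) * (1 - 4 * τ) ^ ((1 : ℝ) / 3) : ℝ) : ℂ) * z ^ 4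
    + (128 / 9 : ℂ) * z ^ 3
    + ((16 / (3 : ℝ) ^ ((1 : ℝ) / 3) * (1 - 4 * τ) ^ ((2 : ℝ) / 3) : ℝ) : ℂ) * z ^ 2
    - ((32 * (3 : ℝ) ^ ((1 : ℝ) / 3) * (1 - 4 * τ) ^ ((1 : ℝ) / 3) : ℝ) : ℂ) * z
    + ((16 * (1 - 8 * τ) : ℝ) : ℂ)

/-- The linear factor `q₂`. -/
def q2 (τ : ℝ) (z : ℂ) : ℂ :=
  (((3 : ℝ) ^ ((1 : ℝ) / 3) * (1 - 4 * τ) ^ ((1 : ℝ) / 3) : ℝ) : ℂ) * z - 1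

/-- The double point `b_* = (3(1−4τ))^{−1/3}`. -/
def bstar (τ : ℝ) : ℝ := (3 * (1 - 4 * τ)) ^ (-(1 : ℝ) / 3)

open Filter Set Topology

lemma exists_cubic_root (p q : ℝ) : ∃ r : ℝ, r ^ 3 - p * r + q = 0 := by
  set M : ℝ := |p| + |q| + 1
  have hM : 1 ≤ M := by linarith [abs_nonneg p, abs_nonneg q]
  obtain ⟨r, -, hr⟩ := intermediate_value_Icc (by linarith : -M ≤ M)
    (f := fun r : ℝ => r ^ 3 - p * r + q) (by fun_prop) (show (0 : ℝ) ∈ Icc _ _ from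
      ⟨by nlinarith [le_abs_self p, le_abs_self q, neg_abs_le p, neg_abs_le q, sq_nonneg (M - 1)],
       by nlinarith [le_abs_self p, le_abs_self q, neg_abs_le p, neg_abs_le q, sq_nonneg (M - 1)]⟩)
  exact ⟨r, hr⟩

/-- Given the root `r`, the other two roots are those of `u² + ru + r² − p`, whose discriminant
is `4p − 3r²`. -/
lemma cubic_discr_eq_of_root {p q r : ℝ} (hr : r ^ 3 - p * r + q = 0) :
    4 * p ^ 3 - 27 * q ^ 2 = (4 * p - 3 * r ^ 2) * (3 * r ^ 2 - p) ^ 2 := by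
  linear_combination (27 * r ^ 3 - 27 * q - 27 * p * r) * hr

lemma exists_cubic_factor_conj_of_discr_neg {p q : ℝ} (h : 4 * p ^ 3 - 27 * q ^ 2 < 0) :
    ∃ (r : ℝ) (w : ℂ), w.im ≠ 0 ∧
      ∀ u : ℂ, u ^ 3 - (p : ℂ) * u + (q : ℂ)
        = (u - (r : ℂ)) * (u - w) * (u - (starRingEnd ℂ) w) := by
  obtain ⟨r, hr⟩ := exists_cubic_root p q
  have hd : 0 < 3 * r ^ 2 - 4 * p := by
    nlinarith [cubic_discr_eq_of_root hr, sq_nonneg (3 * r ^ 2 - p)]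
  set s : ℝ := √(3 * r ^ 2 - 4 * p)
  have hs : (s : ℂ) ^ 2 = 3 * (r : ℂ) ^ 2 - 4 * p := by
    exact_mod_cast Real.sq_sqrt hd.le
  refine ⟨r, (-(r : ℂ) + s * Complex.I) / 2, ?_, fun u => ?_⟩
  · simpa [Complex.div_im] using (Real.sqrt_pos.mpr hd).ne'
  · have hconj : (starRingEnd ℂ) ((-(r : ℂ) + s * Complex.I) / 2)
        = (-(r : ℂ) - s * Complex.I) / 2 := by
      simp [map_div₀, Complex.conj_I, map_ofNat]
      ring
    have hrC : (r : ℂ) ^ 3 - p * r + q = 0 := by exact_mod_cast hr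
    rw [hconj]
    linear_combination hrC - (u - r) / 4 * hs + (u - r) * (s : ℂ) ^ 2 / 4 * Complex.I_sq

lemma exists_cubic_factor_real_of_discr_pos {p q : ℝ} (h : 0 < 4 * p ^ 3 - 27 * q ^ 2) :
    ∃ r₁ r₂ r₃ : ℝ, r₁ ≠ r₂ ∧ r₁ ≠ r₃ ∧ r₂ ≠ r₃ ∧
      ∀ u : ℂ, u ^ 3 - (p : ℂ) * u + (q : ℂ)
        = (u - (r₁ : ℂ)) * (u - (r₂ : ℂ)) * (u - (r₃ : ℂ)) := by
  obtain ⟨r, hr⟩ := exists_cubic_root p q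
  have hdiscr := cubic_discr_eq_of_root hr
  have hd : 0 < 4 * p - 3 * r ^ 2 := by nlinarith [sq_nonneg (3 * r ^ 2 - p)]
  have hsimple : 3 * r ^ 2 - p ≠ 0 := by
    intro h0
    rw [h0] at hdiscr
    linarith
  set s : ℝ := √(4 * p - 3 * r ^ 2)
  have hs : s ^ 2 = 4 * p - 3 * r ^ 2 := Real.sq_sqrt hd.le
  have hprod : (r - (-r + s) / 2) * (r - (-r - s) / 2) = 3 * r ^ 2 - p := by
    linear_combination -hs / 4
  refine ⟨r, (-r + s) / 2, (-r - s) / 2, ?_, ?_, ?_, fun u => ?_⟩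
  · intro he
    exact hsimple (by rw [← hprod, ← he]; ring)
  · intro he
    exact hsimple (by rw [← hprod, ← he]; ring)
  · intro he
    linarith [Real.sqrt_pos.mpr hd]
  · have hrC : (r : ℂ) ^ 3 - p * r + q = 0 := by exact_mod_cast hr
    have hsC : (s : ℂ) ^ 2 = 4 * p - 3 * (r : ℂ) ^ 2 := by exact_mod_cast hs
    push_cast
    linear_combination hrC + (u - r) / 4 * hsC

lemma pos_of_eventually_pos_of_ne_zero {X : Type*} [TopologicalSpace X] {f : X → ℝ} {s : Set X}
    {l : Filter X} [l.NeBot] (hs : IsPreconnected s) (hl : l ≤ 𝓟 s) (hf : ContinuousOn f s)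
    (hne : ∀ x ∈ s, f x ≠ 0) (hpos : ∀ᶠ x in l, 0 < f x) {x : X} (hx : x ∈ s) : 0 < f x := by
  by_contra! h
  obtain ⟨z, hz, hfz⟩ := hs.intermediate_value₂_eventually₁ hx hl hf continuousOn_const h
    (hpos.mono fun _ => le_of_lt)
  exact hne z hz hfz

lemma sign_of_continuous_of_zeros_eq {f : ℝ → ℝ} {a b x₀ : ℝ} (hf : Continuous f) (hab : a < b)
    (ha : f a = 0) (hb : f b = 0) (hzero : ∀ x, f x = 0 → x = a ∨ x = b)
    (hbot : ∀ᶠ x in atBot, 0 < f x) (htop : ∀ᶠ x in atTop, 0 < f x) (hx₀ : f x₀ < 0) :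
    (∀ x, x < a ∨ b < x → 0 < f x) ∧ (∀ x, a < x → x < b → f x < 0) := by
  have hout : ∀ x, x < a ∨ b < x → 0 < f x := by
    rintro x (hx | hx)
    · refine pos_of_eventually_pos_of_ne_zero isPreconnected_Iio
        (le_principal_iff.2 (Iio_mem_atBot a)) hf.continuousOn (fun y hy h0 => ?_) hbot hx
      rcases hzero y h0 with rfl | rfl <;> linarith [mem_Iio.1 hy]
    · refine pos_of_eventually_pos_of_ne_zero isPreconnected_Ioi
        (le_principal_iff.2 (Ioi_mem_atTop b)) hf.continuousOn (fun y hy h0 => ?_) htop hx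
      rcases hzero y h0 with rfl | rfl <;> linarith [mem_Ioi.1 hy]
  have hx₀mem : x₀ ∈ Ioo a b := by
    constructor
    · rcases lt_trichotomy x₀ a with h | rfl | h
      · linarith [hout x₀ (.inl h)]
      · linarith
      · exact h
    · rcases lt_trichotomy x₀ b with h | rfl | h
      · exact h
      · linarith
      · linarith [hout x₀ (.inr h)]
  refine ⟨hout, fun x hax hxb => neg_pos.1 ?_⟩
  refine pos_of_eventually_pos_of_ne_zero (f := fun x => -f x) isPreconnected_Ioo
    ((pure_le_principal x₀).2 hx₀mem) hf.neg.continuousOn (fun y hy h0 => ?_)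
    (eventually_pure.2 (neg_pos.2 hx₀)) ⟨hax, hxb⟩
  rcases hzero y (neg_eq_zero.1 h0) with rfl | rfl <;> linarith [hy.1, hy.2]

lemma eventually_quartic_pos {A b c d e : ℝ} (hA : 0 < A) :
    ∀ᶠ x in Bornology.cobounded ℝ, 0 < A * x ^ 4 + b * x ^ 3 + c * x ^ 2 + d * x + e := by
  have hlim : Tendsto (fun x : ℝ => A + b * x⁻¹ + c * x⁻¹ ^ 2 + d * x⁻¹ ^ 3 + e * x⁻¹ ^ 4)
      (Bornology.cobounded ℝ) (𝓝 A) :=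
    ((by fun_prop : Continuous fun y : ℝ => A + b * y + c * y ^ 2 + d * y ^ 3
      + e * y ^ 4).tendsto' 0 A (by simp)).comp tendsto_inv₀_cobounded
  filter_upwards [hlim.eventually_const_lt hA, Bornology.eventually_ne_cobounded 0] with x hpos hx
  have hfactor : A * x ^ 4 + b * x ^ 3 + c * x ^ 2 + d * x + e
      = x ^ 4 * (A + b * x⁻¹ + c * x⁻¹ ^ 2 + d * x⁻¹ ^ 3 + e * x⁻¹ ^ 4) := by
    field_simp
  rw [hfactor]
  exact mul_pos (by positivity) hpos

lemma rpow_one_third_pow_three {a : ℝ} (ha : 0 ≤ a) : (a ^ ((1 : ℝ) / 3)) ^ 3 = a := by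
  rw [one_div]
  exact_mod_cast Real.rpow_inv_natCast_pow ha three_ne_zero

/-- `(3(1−4τ))^{1/3}`, the slope of `q₂`. -/
def kappa (τ : ℝ) : ℝ := (3 : ℝ) ^ ((1 : ℝ) / 3) * (1 - 4 * τ) ^ ((1 : ℝ) / 3)

def q1Real (τ x : ℝ) : ℝ :=
  256 / 9 * kappa τ * x ^ 4 + 128 / 9 * x ^ 3 + 16 / 3 * kappa τ ^ 2 * x ^ 2 - 32 * kappa τ * x
    + 16 * (1 - 8 * τ)

lemma continuous_q1Real (τ : ℝ) : Continuous (q1Real τ) := by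
  unfold q1Real
  fun_prop

lemma RR_ofReal (τ x : ℝ) : RR τ x = ((3 * x ^ 4 - 3 * x - ccf τ : ℝ) : ℂ) := by
  push_cast [RR]
  rfl

lemma DD_ofReal (τ x : ℝ) :
    DD τ x = ((-2 * x ^ 6 + 3 * x ^ 3 + ccf τ * x ^ 2 - 3 * τ : ℝ) : ℂ) := by
  push_cast [DD]
  rfl

section

variable {τ : ℝ} (hτ : τ < 1 / 4)
include hτ

lemma kappa_pos : 0 < kappa τ :=
  mul_pos (Real.rpow_pos_of_pos three_pos _) (Real.rpow_pos_of_pos (by linarith) _)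

lemma kappa_pow_three : kappa τ ^ 3 = 3 * (1 - 4 * τ) := by
  rw [kappa, mul_pow, rpow_one_third_pow_three zero_le_three,
    rpow_one_third_pow_three (by linarith)]

lemma ccf_eq : ccf τ = -(3 / 4) * kappa τ ^ 2 := by
  have hcube : (243 * (1 - 4 * τ) ^ 2 / 64) ^ ((1 : ℝ) / 3) = 3 / 4 * kappa τ ^ 2 := by
    refine (Odd.strictMono_pow (by decide : Odd 3)).injective ?_
    rw [rpow_one_third_pow_three (by positivity)]
    linear_combination (-(27 / 64) * (kappa τ ^ 3 + 3 * (1 - 4 * τ))) * kappa_pow_three hτ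
  rw [ccf, hcube]
  ring

lemma bstar_eq : bstar τ = (kappa τ)⁻¹ := by
  rw [bstar, kappa, neg_div, Real.rpow_neg (by linarith),
    Real.mul_rpow zero_le_three (by linarith)]

lemma q1_ofReal (x : ℝ) : q1 τ x = q1Real τ x := by
  have h3 : (0 : ℝ) < (3 : ℝ) ^ ((1 : ℝ) / 3) := Real.rpow_pos_of_pos three_pos _
  have hlead :
      256 / (3 : ℝ) ^ ((5 : ℝ) / 3) * (1 - 4 * τ) ^ ((1 : ℝ) / 3) = 256 / 9 * kappa τ := by
    have h9 : (3 : ℝ) ^ ((5 : ℝ) / 3) * (3 : ℝ) ^ ((1 : ℝ) / 3) = 9 := by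
      rw [← Real.rpow_add three_pos]
      norm_num
    have h53 : (0 : ℝ) < (3 : ℝ) ^ ((5 : ℝ) / 3) := Real.rpow_pos_of_pos three_pos _
    rw [kappa]
    field_simp
    linear_combination (-(1 - 4 * τ) ^ ((1 : ℝ) / 3)) * h9
  have hquad :
      16 / (3 : ℝ) ^ ((1 : ℝ) / 3) * (1 - 4 * τ) ^ ((2 : ℝ) / 3) = 16 / 3 * kappa τ ^ 2 := by
    have h23 : (1 - 4 * τ) ^ ((2 : ℝ) / 3) = ((1 - 4 * τ) ^ ((1 : ℝ) / 3)) ^ 2 := by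
      rw [← Real.rpow_natCast _ 2, ← Real.rpow_mul (by linarith)]
      norm_num
    rw [kappa, h23, mul_pow]
    field_simp
    linear_combination (-((1 - 4 * τ) ^ ((1 : ℝ) / 3)) ^ 2) *
      rpow_one_third_pow_three (zero_le_three (α := ℝ))
  rw [q1, q1Real, hlead, hquad, kappa]
  push_cast
  ring

lemma discr_eq (x : ℝ) :
    4 * (3 * x ^ 4 - 3 * x - ccf τ) ^ 3 - 27 * (-2 * x ^ 6 + 3 * x ^ 3 + ccf τ * x ^ 2 - 3 * τ) ^ 2
      = 243 / 256 * q1Real τ x * (kappa τ * x - 1) ^ 2 := by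
  rw [ccf_eq hτ, q1Real]
  linear_combination (81 / 16 - 81 / 4 * τ + 27 / 16 * kappa τ ^ 3 - 81 / 4 * x * kappa τ
    + 81 / 2 * x ^ 3 - 27 * x ^ 6) * kappa_pow_three hτ

lemma eventually_q1Real_pos : ∀ᶠ x in Bornology.cobounded ℝ, 0 < q1Real τ x :=
  (eventually_quartic_pos (A := 256 / 9 * kappa τ) (b := 128 / 9) (c := 16 / 3 * kappa τ ^ 2)
    (d := -(32 * kappa τ)) (e := 16 * (1 - 8 * τ)) (by linarith [kappa_pos hτ])).mono fun x hx => by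
      rw [q1Real]
      linarith

lemma q1Real_kappa_sq_div_four_neg (hτ₀ : 0 < τ) : q1Real τ (kappa τ ^ 2 / 4) < 0 := by
  have hval : q1Real τ (kappa τ ^ 2 / 4)
      = 3 * (1 - 4 * τ) ^ 3 + 5 * (1 - 4 * τ) ^ 2 + 8 * (1 - 4 * τ) - 16 := by
    rw [q1Real]
    linear_combination ((kappa τ ^ 6 + 3 * (1 - 4 * τ) * kappa τ ^ 3 + 9 * (1 - 4 * τ) ^ 2
      + 5 * kappa τ ^ 3 + 15 * (1 - 4 * τ) - 72) / 9) * kappa_pow_three hτ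
  rw [hval]
  nlinarith [sq_nonneg (1 - 4 * τ)]

lemma q1Real_bstar_nonneg : 0 ≤ q1Real τ (bstar τ) := by
  have hκ := kappa_pos hτ
  have hval : q1Real τ (bstar τ) = 32 * (kappa τ ^ 3 - 2) ^ 2 / (3 * kappa τ ^ 3) := by
    rw [bstar_eq hτ, q1Real]
    field_simp
    linear_combination (-288 * kappa τ ^ 3) * kappa_pow_three hτ
  rw [hval]
  positivity

lemma kappa_mul_sub_one_ne_zero {x : ℝ} (hx : x ≠ bstar τ) : kappa τ * x - 1 ≠ 0 := by
  rw [bstar_eq hτ] at hx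
  rw [sub_ne_zero]
  intro h
  exact hx (eq_inv_of_mul_eq_one_right h)

end

/-- For `τ ∈ (0,1/4)` with `a₁ < b₁` the two real roots of `q₁`: for real
`x ∈ (a₁, b₁)` the cubic `u³ − R(x)u + D(x)` has exactly one real root and a pair of nonreal
complex-conjugate roots, while for real `x` with `x < a₁` or `x > b₁`, and `x ≠ b_*`, it has
three distinct real roots. -/
theorem real_roots_of_cubic (τ a₁ b₁ : ℝ) (hτ : τ ∈ Set.Ioo (0 : ℝ) (1 / 4))
    (hab : a₁ < b₁) (ha : q1 τ ((a₁ : ℝ) : ℂ) = 0) (hb : q1 τ ((b₁ : ℝ) : ℂ) = 0)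
    (honly : ∀ x : ℝ, q1 τ ((x : ℝ) : ℂ) = 0 → x = a₁ ∨ x = b₁) :
    (∀ x : ℝ, a₁ < x → x < b₁ →
      ∃ (r : ℝ) (w : ℂ), w.im ≠ 0 ∧
        ∀ u : ℂ, u ^ 3 - RR τ ((x : ℝ) : ℂ) * u + DD τ ((x : ℝ) : ℂ)
          = (u - (r : ℂ)) * (u - w) * (u - (starRingEnd ℂ) w)) ∧
    (∀ x : ℝ, (x < a₁ ∨ b₁ < x) → x ≠ bstar τ →
      ∃ r₁ r₂ r₃ : ℝ, r₁ ≠ r₂ ∧ r₁ ≠ r₃ ∧ r₂ ≠ r₃ ∧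
        ∀ u : ℂ, u ^ 3 - RR τ ((x : ℝ) : ℂ) * u + DD τ ((x : ℝ) : ℂ)
          = (u - (r₁ : ℂ)) * (u - (r₂ : ℂ)) * (u - (r₃ : ℂ))) := by
  obtain ⟨hτ₀, hτ⟩ := hτ
  have hq1 : ∀ x : ℝ, q1 τ x = 0 ↔ q1Real τ x = 0 := fun x => by
    rw [q1_ofReal hτ, Complex.ofReal_eq_zero]
  obtain ⟨hout, hin⟩ := sign_of_continuous_of_zeros_eq (continuous_q1Real τ) hab
    ((hq1 a₁).1 ha) ((hq1 b₁).1 hb) (fun x hx => honly x ((hq1 x).2 hx))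
    ((eventually_q1Real_pos hτ).filter_mono IsOrderBornology.atBot_le_cobounded)
    ((eventually_q1Real_pos hτ).filter_mono IsOrderBornology.atTop_le_cobounded)
    (q1Real_kappa_sq_div_four_neg hτ hτ₀)
  refine ⟨fun x hax hxb => ?_, fun x hx hx_ne => ?_⟩
  · have hneg := hin x hax hxb
    have hx_ne : x ≠ bstar τ := fun h => hneg.not_ge (h ▸ q1Real_bstar_nonneg hτ)
    obtain ⟨r, w, hw, hfac⟩ := exists_cubic_factor_conj_of_discr_neg (by
      rw [discr_eq hτ]
      exact mul_neg_of_neg_of_pos (mul_neg_of_pos_of_neg (by norm_num) hneg)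
        (sq_pos_of_ne_zero (kappa_mul_sub_one_ne_zero hτ hx_ne)))
    exact ⟨r, w, hw, fun u => by rw [RR_ofReal, DD_ofReal]; exact hfac u⟩
  · obtain ⟨r₁, r₂, r₃, h₁₂, h₁₃, h₂₃, hfac⟩ := exists_cubic_factor_real_of_discr_pos (by
      rw [discr_eq hτ]
      exact mul_pos (mul_pos (by norm_num) (hout x hx))
        (sq_pos_of_ne_zero (kappa_mul_sub_one_ne_zero hτ hx_ne)))
    exact ⟨r₁, r₂, r₃, h₁₂, h₁₃, h₂₃, fun u => by rw [RR_ofReal, DD_ofReal]; exact hfac u⟩
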